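/- arXiv:2208.02213 — 3 statements merged into one kernel-verified Lean document; each statement's English description precedes it below -/
import Mathlib

section
/- Let $\mathbb{P} \in \mathbb{R}^{n \times n}$ be an idempotent matrix with $\mathbb{P} \neq 0$ and $\mathbb{P} \neq I$. Then $\|I - \mathbb{P}\|_2 = \|\mathbb{P}\|_2$. -/
open Matrix

lemma key_half {E : Type*} [NormedAddCommGroup E] [InnerProductSpace ℝ E]
    (f : E →L[ℝ] E) (hf : ∀ x, f (f x) = f x) (h0 : f ≠ 0) :
    ‖(1 : E →L[ℝ] E) - f‖ ≤ ‖f‖ := by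
  set N := ‖f‖ with hN
  -- N ≥ 1
  have hN1 : 1 ≤ N := by
    obtain ⟨y, hy⟩ : ∃ y, f y ≠ 0 := by
      by_contra h
      push_neg at h
      exact h0 (ContinuousLinearMap.ext fun x => h x)
    have h1 : ‖f (f y)‖ ≤ N * ‖f y‖ := f.le_opNorm (f y)
    rw [hf y] at h1
    have := norm_pos_iff.mpr hy
    nlinarith
  have hN0 : (0:ℝ) ≤ N := by linarith
  apply ContinuousLinearMap.opNorm_le_bound _ hN0
  intro x
  have hx : ((1 : E →L[ℝ] E) - f) x = x - f x := rfl
  rw [hx]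
  set a := ‖f x‖ with ha
  set b := ‖x - f x‖ with hb
  set c := (inner ℝ (f x) (x - f x) : ℝ) with hc
  have ha0 : 0 ≤ a := norm_nonneg _
  have hb0 : 0 ≤ b := norm_nonneg _
  -- step 1: ∀ t, a² ≤ N²(a² + 2tc + t²b²)
  have step1 : ∀ t : ℝ, a^2 ≤ N^2 * (a^2 + 2*t*c + t^2*b^2) := by
    intro t
    have h1 : f (f x + t • (x - f x)) = f x := by
      rw [map_add, _root_.map_smul, map_sub, hf x, sub_self, smul_zero, add_zero]
    have h2 : ‖f (f x + t • (x - f x))‖ ≤ N * ‖f x + t • (x - f x)‖ :=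
      f.le_opNorm _
    rw [h1] at h2
    have h3 : ‖f x + t • (x - f x)‖^2 = a^2 + 2*t*c + t^2*b^2 := by
      rw [norm_add_sq_real, real_inner_smul_right, norm_smul]
      rw [Real.norm_eq_abs, mul_pow, sq_abs]
      ring
    have h4 : a^2 ≤ (N * ‖f x + t • (x - f x)‖)^2 := by
      have := norm_nonneg (f x + t • (x - f x))
      nlinarith
    rw [mul_pow, h3] at h4
    exact h4
  -- step 2: N²c² ≤ (N²-1)a²b²
  have step2 : N^2 * c^2 ≤ (N^2 - 1) * (a^2 * b^2) := by
    rcases eq_or_lt_of_le hb0 with hbz | hbp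
    · have hcz : c = 0 := by
        have : x - f x = 0 := by
          rw [← norm_eq_zero]; exact hbz.symm
        rw [hc, this, inner_zero_right]
      rw [hcz]
      have h1 := step1 0
      nlinarith
    · have h1 := step1 (-c / b^2)
      have hb2 : b^2 > 0 := by positivity
      have h2 : a^2 + 2*(-c/b^2)*c + (-c/b^2)^2*b^2 = a^2 - c^2/b^2 := by
        field_simp; ring
      rw [h2] at h1
      have h3 := mul_le_mul_of_nonneg_right h1 hb2.le
      have h4 : N^2*(a^2 - c^2/b^2)*b^2 = N^2*a^2*b^2 - N^2*c^2 := by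
        field_simp
      nlinarith
  -- step 3: ‖x‖² = a² + 2c + b²
  have step3 : ‖x‖^2 = a^2 + 2*c + b^2 := by
    have hxd : x = f x + (x - f x) := by abel
    calc ‖x‖^2 = ‖f x + (x - f x)‖^2 := by rw [← hxd]
    _ = a^2 + 2*c + b^2 := by rw [norm_add_sq_real]
  -- step 4: conclude  b ≤ N ‖x‖
  set s := Real.sqrt (N^2 - 1) with hs
  have hs0 : 0 ≤ s := Real.sqrt_nonneg _
  have hs2 : s^2 = N^2 - 1 := Real.sq_sqrt (by nlinarith)
  have hkey : N^2 * c^2 ≤ (s*(a*b))^2 := by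
    rw [mul_pow, hs2, mul_pow]; linarith
  have hNc : -(s*(a*b)) ≤ N * c := by nlinarith [sq_nonneg (N*c + s*(a*b)), sq_nonneg (N*c - s*(a*b)), mul_nonneg hs0 (mul_nonneg ha0 hb0)]
  have hfinal : b^2 ≤ N^2 * ‖x‖^2 := by
    rw [step3]
    nlinarith [sq_nonneg (N*a - s*b), mul_nonneg hN0 (mul_nonneg hs0 (mul_nonneg ha0 hb0))]
  have hxn : 0 ≤ N * ‖x‖ := mul_nonneg hN0 (norm_nonneg x)
  nlinarith


/-- The spectral (operator 2-) norm of a real matrix. -/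
noncomputable def specNorm {m n : ℕ} (A : Matrix (Fin m) (Fin n) ℝ) : ℝ :=
  ‖LinearMap.toContinuousLinearMap (Matrix.toEuclideanLin A)‖

set_option maxHeartbeats 1000000 in
/-- Kato/Szyld: if `ℙ` is idempotent with `ℙ ≠ 0` and `ℙ ≠ I`, then
`‖I - ℙ‖₂ = ‖ℙ‖₂`. -/
theorem norm_complementary_projector {n : ℕ}
    (P : Matrix (Fin n) (Fin n) ℝ)
    (hidem : P * P = P) (h0 : P ≠ 0) (h1 : P ≠ 1) :
    specNorm ((1 : Matrix (Fin n) (Fin n) ℝ) - P) = specNorm P := by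
  classical
  set f := LinearMap.toContinuousLinearMap (Matrix.toEuclideanLin P) with hfdef
  have hfapp : ∀ x, f x = Matrix.toEuclideanLin P x := fun _ => rfl
  have hf : ∀ x, f (f x) = f x := by
    intro x
    simp only [hfapp, Matrix.toEuclideanLin_apply, Equiv.apply_symm_apply,
      Matrix.mulVec_mulVec, hidem]
  have hfne : f ≠ 0 := by
    intro h
    apply h0
    have : Matrix.toEuclideanLin P = 0 := by
      ext1 x
      have := congrFun (congrArg DFunLike.coe h) x
      simpa [hfapp] using this
    exact (LinearEquiv.map_eq_zero_iff _).mp this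
  have hone : LinearMap.toContinuousLinearMap
      (Matrix.toEuclideanLin (1 - P)) = 1 - f := by
    refine ContinuousLinearMap.ext fun x => ?_
    show Matrix.toEuclideanLin (1 - P) x = x - Matrix.toEuclideanLin P x
    simp [Matrix.toEuclideanLin_apply, Matrix.sub_mulVec, Matrix.one_mulVec,
      sub_eq_add_neg]
  have hgne : (1 : EuclideanSpace ℝ (Fin n) →L[ℝ] EuclideanSpace ℝ (Fin n)) - f ≠ 0 := by
    intro h
    apply h1
    have h2 : Matrix.toEuclideanLin (1 - P) = 0 := by
      ext1 x
      have := congrFun (congrArg DFunLike.coe (hone.trans h)) x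
      simpa using this
    have h3 : (1 : Matrix (Fin n) (Fin n) ℝ) - P = 0 :=
      (LinearEquiv.map_eq_zero_iff _).mp h2
    linear_combination (norm := abel) -h3
  have hg : ∀ x, ((1 : EuclideanSpace ℝ (Fin n) →L[ℝ] EuclideanSpace ℝ (Fin n)) - f) (((1 : EuclideanSpace ℝ (Fin n) →L[ℝ] EuclideanSpace ℝ (Fin n)) - f) x)
      = ((1 : EuclideanSpace ℝ (Fin n) →L[ℝ] EuclideanSpace ℝ (Fin n)) - f) x := by
    intro x
    have h1 : ∀ y, ((1 : EuclideanSpace ℝ (Fin n) →L[ℝ] EuclideanSpace ℝ (Fin n)) - f) y = y - f y := fun _ => rfl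
    rw [h1, h1, map_sub, hf x, sub_self, sub_zero]
  have hle1 : ‖(1 : EuclideanSpace ℝ (Fin n) →L[ℝ] EuclideanSpace ℝ (Fin n)) - f‖ ≤ ‖f‖ := key_half f hf hfne
  have hle2 : ‖f‖ ≤ ‖(1 : EuclideanSpace ℝ (Fin n) →L[ℝ] EuclideanSpace ℝ (Fin n)) - f‖ := by
    have := key_half ((1 : EuclideanSpace ℝ (Fin n) →L[ℝ] EuclideanSpace ℝ (Fin n)) - f) hg hgne
    rwa [sub_sub_cancel] at this
  show ‖LinearMap.toContinuousLinearMap (Matrix.toEuclideanLin (1 - P))‖ = ‖f‖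
  rw [hone]
  exact le_antisymm hle1 hle2
end

section
/- Let $V \in \mathbb{R}^{n \times k}$ have orthonormal columns and $P \in \mathbb{R}^{n \times k}$ consist of distinct columns of the identity with $V^T P$ nonsingular. Then the oblique projector $\mathbb{P} = P (V^T P)^{-1} V^T$ satisfies $\|\mathbb{P}\|_2 = \|(V^T P)^{-1}\|_2$. -/
open Matrix

open scoped Matrix.Norms.L2Operator

lemma specNorm_eq_l2 {m n : ℕ} (A : Matrix (Fin m) (Fin n) ℝ) : specNorm A = ‖A‖ := rfl

lemma l2_norm_transpose {m n : ℕ} (A : Matrix (Fin m) (Fin n) ℝ) : ‖Aᵀ‖ = ‖A‖ := by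
  have h : Aᵀ = Aᴴ := by ext i j; simp [Matrix.conjTranspose_apply]
  rw [h, Matrix.l2_opNorm_conjTranspose]

lemma l2_norm_one_le (n : ℕ) : ‖(1 : Matrix (Fin n) (Fin n) ℝ)‖ ≤ 1 := by
  rw [Matrix.l2_opNorm_def]
  apply ContinuousLinearMap.opNorm_le_bound _ zero_le_one
  intro x
  have : Matrix.toEuclideanLin (1 : Matrix (Fin n) (Fin n) ℝ) x = x := by
    apply (WithLp.equiv 2 (Fin n → ℝ)).injective
    simp [Matrix.ofLp_toEuclideanLin_apply, Matrix.one_mulVec]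
  simp only [LinearEquiv.trans_apply, LinearMap.coe_toContinuousLinearMap']
  rw [this, one_mul]

lemma l2_norm_le_one {m n : ℕ} (C : Matrix (Fin m) (Fin n) ℝ) (hC : Cᵀ * C = 1) :
    ‖C‖ ≤ 1 := by
  have h : Cᴴ = Cᵀ := by ext i j; simp [Matrix.conjTranspose_apply]
  have h2 := Matrix.l2_opNorm_conjTranspose_mul_self C
  rw [h, hC] at h2
  nlinarith [l2_norm_one_le n, norm_nonneg C, h2.symm]

lemma l2_mul_left {m n p : ℕ} (C : Matrix (Fin m) (Fin n) ℝ) (hC : Cᵀ * C = 1)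
    (A : Matrix (Fin n) (Fin p) ℝ) : ‖C * A‖ = ‖A‖ := by
  have hC1 : ‖C‖ ≤ 1 := l2_norm_le_one C hC
  have hCt : ‖Cᵀ‖ ≤ 1 := by rw [l2_norm_transpose]; exact hC1
  apply le_antisymm
  · calc ‖C * A‖ ≤ ‖C‖ * ‖A‖ := Matrix.l2_opNorm_mul _ _
      _ ≤ 1 * ‖A‖ := mul_le_mul_of_nonneg_right hC1 (norm_nonneg _)
      _ = ‖A‖ := one_mul _
  · have hA : Cᵀ * (C * A) = A := by rw [← Matrix.mul_assoc, hC, Matrix.one_mul]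
    calc ‖A‖ = ‖Cᵀ * (C * A)‖ := by rw [hA]
      _ ≤ ‖Cᵀ‖ * ‖C * A‖ := Matrix.l2_opNorm_mul _ _
      _ ≤ 1 * ‖C * A‖ := mul_le_mul_of_nonneg_right hCt (norm_nonneg _)
      _ = ‖C * A‖ := one_mul _

/-- if `V` has orthonormal columns and `P` consists of distinct columns of
the identity with `Vᵀ P` nonsingular, then the oblique projector `ℙ = P (Vᵀ P)⁻¹ Vᵀ`
satisfies `‖ℙ‖₂ = ‖(Vᵀ P)⁻¹‖₂`. -/
theorem oblique_projector_norm {n k : ℕ}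
    (V P : Matrix (Fin n) (Fin k) ℝ)
    (hV : Vᵀ * V = 1)
    (f : Fin k → Fin n) (hf : Function.Injective f)
    (hP : P = (1 : Matrix (Fin n) (Fin n) ℝ).submatrix id f)
    (hinv : IsUnit (Vᵀ * P)) :
    specNorm (P * (Vᵀ * P)⁻¹ * Vᵀ) = specNorm ((Vᵀ * P)⁻¹) := by
  have hPP : Pᵀ * P = 1 := by
    subst hP
    ext i j
    simp [Matrix.mul_apply, Matrix.one_apply, hf.eq_iff]
  set M : Matrix (Fin k) (Fin k) ℝ := (Vᵀ * P)⁻¹ with hM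
  rw [specNorm_eq_l2, specNorm_eq_l2]
  calc ‖P * M * Vᵀ‖ = ‖(P * M * Vᵀ)ᵀ‖ := (l2_norm_transpose _).symm
    _ = ‖V * (Mᵀ * Pᵀ)‖ := by rw [Matrix.transpose_mul, Matrix.transpose_mul,
        Matrix.transpose_transpose]
    _ = ‖Mᵀ * Pᵀ‖ := l2_mul_left V hV _
    _ = ‖(P * M)ᵀ‖ := by rw [Matrix.transpose_mul]
    _ = ‖P * M‖ := l2_norm_transpose _
    _ = ‖M‖ := l2_mul_left P hPP M
end

section
/- Let $U \in \mathbb{R}^{m \times k}$ ($m > k$) and let $\widehat{U} = U(\mathbf{s},:)$ be a nonsingular $k \times k$ row submatrix. If $B = U \widehat{U}^{-1}$ has an entry $|b_{ij}| > 1$ with $i \notin \mathbf{s}$, then replacing row $\mathbf{s}(j)$ of the selected set by row $i$ yields a submatrix $\widehat{U}'$ with $|\det \widehat{U}'| = |b_{ij}| \cdot |\det \widehat{U}| > |\det \widehat{U}|$. -/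
open Matrix

theorem det_updateRow_one {k : ℕ} (j : Fin k) (v : Fin k → ℝ) :
    ((1 : Matrix (Fin k) (Fin k) ℝ).updateRow j v).det = v j := by
  rw [← Matrix.cramer_transpose_apply, Matrix.transpose_one, Matrix.cramer_one]
  rfl

/-- MaxVol swap step: if `Û = U(s,:)` is nonsingular and
`B = U Û⁻¹` has `|B i j| > 1` for some unselected row `i`, then replacing the
`j`th selected row by row `i` multiplies `|det Û|` by `|B i j|`, strictly
increasing the volume. -/
theorem maxvol_swap_increases_volume {m k : ℕ} (hmk : k < m)
    (U : Matrix (Fin m) (Fin k) ℝ)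
    (s : Fin k → Fin m) (hs : Function.Injective s)
    (hinv : IsUnit (U.submatrix s id))
    (i : Fin m) (j : Fin k) (hi : i ∉ Set.range s)
    (hb : 1 < |(U * (U.submatrix s id)⁻¹) i j|) :
    |(U.submatrix (Function.update s j i) id).det| =
        |(U * (U.submatrix s id)⁻¹) i j| * |(U.submatrix s id).det| ∧
      |(U.submatrix s id).det| < |(U.submatrix (Function.update s j i) id).det| := by
  set A := U.submatrix s id with hA
  set B := U * A⁻¹ with hB
  have hdetU : IsUnit A.det := (Matrix.isUnit_iff_isUnit_det A).mp hinv
  have hBA : B * A = U := Matrix.nonsing_inv_mul_cancel_right A U hdetU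
  have hsub : ∀ t : Fin k → Fin m,
      U.submatrix t id = (B.submatrix t id) * A := by
    intro t
    have := Matrix.submatrix_mul_equiv B A t (Equiv.refl (Fin k)) id
    simpa [hBA] using this.symm
  have hBs : B.submatrix s id = 1 := by
    have h1 : U.submatrix s id = (B.submatrix s id) * A := hsub s
    have := h1.symm.trans rfl
    -- A = B.submatrix s id * A, cancel A
    have hAinv : Invertible A := hinv.invertible
    calc B.submatrix s id = (B.submatrix s id) * A * A⁻¹ :=
          (Matrix.mul_nonsing_inv_cancel_right A _ hdetU).symm
      _ = A * A⁻¹ := by rw [← h1]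
      _ = 1 := Matrix.mul_nonsing_inv A hdetU
  have hupd : B.submatrix (Function.update s j i) id =
      (1 : Matrix (Fin k) (Fin k) ℝ).updateRow j (B i) := by
    ext r c
    by_cases hr : r = j
    · subst hr; simp [Function.update_self]
    · have : (B.submatrix (Function.update s j i) id) r c = B (s r) c := by
        simp [Function.update_of_ne hr]
      rw [this, Matrix.updateRow_ne hr]
      have := congrFun (congrFun hBs r) c
      simpa using this
  have hdet : (U.submatrix (Function.update s j i) id).det = B i j * A.det := by
    rw [hsub (Function.update s j i), Matrix.det_mul, hupd, det_updateRow_one]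
  have hdetA : A.det ≠ 0 := by
    intro h
    exact hdetU.ne_zero (by simpa using h)
  constructor
  · rw [hdet, abs_mul]
  · rw [hdet, abs_mul]
    have h0 : 0 < |A.det| := abs_pos.mpr hdetA
    calc |A.det| = 1 * |A.det| := (one_mul _).symm
      _ < |B i j| * |A.det| := by exact mul_lt_mul_of_pos_right hb h0
end
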